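/- arXiv:math/0602059 — 6 statements merged into one kernel-verified Lean document; each statement's English description precedes it below -/
import Mathlib

section
/- If a digraph G contains no directed circuits, then no dominated vertex (a vertex of positive in-degree in G) can be a root in a maximum out forest of G. -/
/-- The arc relation of a finite arc set. -/
def arcRel {V : Type*} [DecidableEq V] (F : Finset (V × V)) : V → V → Prop :=
  fun a b => (a, b) ∈ F

/-- A diverging forest: no directed cycles, and every vertex has in-degree at most 1. -/
def IsDivForest {V : Type*} [DecidableEq V] (F : Finset (V × V)) : Prop :=
  (∀ v, ¬ Relation.TransGen (arcRel F) v v) ∧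
  ∀ w z₁ z₂, (z₁, w) ∈ F → (z₂, w) ∈ F → z₁ = z₂

/-- A maximum out forest of the digraph with arc set `E`: a spanning diverging forest
with the maximum possible number of arcs. -/
def IsMaxOutForest {V : Type*} [DecidableEq V] (E F : Finset (V × V)) : Prop :=
  F ⊆ E ∧ IsDivForest F ∧
  ∀ F' : Finset (V × V), F' ⊆ E → IsDivForest F' → F'.card ≤ F.card

/-
If `w` were a root of the maximum out forest `F` although some arc `(u, w)` of `G` enters it,
then `F ∪ {(u, w)}` would still have in-degree at most one everywhere, and it cannot close a
circuit because `G` has none; it would be a larger out forest.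
-/

section

variable {V : Type*} [DecidableEq V]

theorem acyclic_of_subset {E F : Finset (V × V)}
    (hE : ∀ v, ¬ Relation.TransGen (arcRel E) v v) (hFE : F ⊆ E) (v : V) :
    ¬ Relation.TransGen (arcRel F) v v :=
  fun hv => hE v (Relation.TransGen.mono (fun _ _ hab => hFE hab) v v hv)

theorem IsDivForest.insert_of_notMem {F : Finset (V × V)} (hF : IsDivForest F) {u w : V}
    (hroot : ∀ z, (z, w) ∉ F)
    (hacyc : ∀ v, ¬ Relation.TransGen (arcRel (insert (u, w) F)) v v) :
    IsDivForest (insert (u, w) F) := by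
  refine ⟨hacyc, fun x z₁ z₂ h₁ h₂ => ?_⟩
  simp only [Finset.mem_insert, Prod.mk.injEq] at h₁ h₂
  rcases h₁ with ⟨rfl, rfl⟩ | h₁
  · rcases h₂ with ⟨rfl, -⟩ | h₂
    · rfl
    · exact absurd h₂ (hroot z₂)
  · rcases h₂ with ⟨rfl, rfl⟩ | h₂
    · exact absurd h₁ (hroot z₁)
    · exact hF.2 x z₁ z₂ h₁ h₂

end

/-- If `G` has no directed circuits, then no dominated vertex is a root in a maximum
out forest. -/
theorem stmt3 {V : Type*} [DecidableEq V] (E F : Finset (V × V)) (w : V)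
    (hacyc : ∀ v, ¬ Relation.TransGen (arcRel E) v v)
    (hdom : ∃ u, (u, w) ∈ E)
    (hF : IsMaxOutForest E F) :
    ∃ u, (u, w) ∈ F := by
  by_contra! hroot
  obtain ⟨u, hu⟩ := hdom
  obtain ⟨hFE, hdiv, hmax⟩ := hF
  have hsub : insert (u, w) F ⊆ E := Finset.insert_subset hu hFE
  have hlarger := hmax _ hsub (hdiv.insert_of_notMem hroot (acyclic_of_subset hacyc hsub))
  rw [Finset.card_insert_of_notMem (hroot u)] at hlarger
  omega
end

section
/- Suppose G contains a directed path from vertex i to vertex j, and F is a maximum out forest of G containing no path from i to j. Then either F contains an arc (k,j) for some k ≠ i, or i is reachable from j in F. -/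
/-!
Let `j` be a root of a maximum out forest `F`. If `(c, j)` is an arc of `G` and `j` does not
reach `c` in `F`, adding `(c, j)` to `F` gives a larger out forest; so `j` reaches `c`. If
moreover `c ≠ j`, exchanging the `F`-arc entering `c` for `(c, j)` gives another maximum out
forest, rooted at `c`, in which everything reachable from `c` was reachable from `j` in `F`.
Induction along a `G`-path from `i` to `j` therefore shows that `j` reaches `i` in `F`.
-/

open Relation

section

variable {V : Type*} [DecidableEq V]

lemma arcRel_mono {F F' : Finset (V × V)} (h : F ⊆ F') : arcRel F ≤ arcRel F' :=
  fun _ _ hab => h hab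

lemma not_reflTransGen_arcRel_of_forall_notMem {F : Finset (V × V)} {s t : V}
    (hroot : ∀ w, (w, t) ∉ F) (hst : s ≠ t) : ¬ ReflTransGen (arcRel F) s t := by
  intro h
  rcases h.cases_tail with rfl | ⟨w, -, hw⟩
  · exact hst rfl
  · exact hroot w hw

section InsertArc

variable {F : Finset (V × V)} {c t : V}

lemma reflTransGen_arcRel_insert {x y : V} (h : ReflTransGen (arcRel (insert (c, t) F)) x y) :
    ReflTransGen (arcRel F) t y ∨ ReflTransGen (arcRel F) x y := by
  induction h with
  | refl => exact Or.inr .refl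
  | tail _ harc ih =>
    simp only [arcRel, Finset.mem_insert, Prod.mk.injEq] at harc
    rcases harc with ⟨-, rfl⟩ | hm
    · exact Or.inl .refl
    · exact ih.imp (·.tail hm) (·.tail hm)

lemma transGen_arcRel_insert {x y : V} (h : TransGen (arcRel (insert (c, t) F)) x y) :
    TransGen (arcRel F) x y ∨
      ReflTransGen (arcRel (insert (c, t) F)) x c ∧ ReflTransGen (arcRel F) t y := by
  induction h with
  | single harc =>
    simp only [arcRel, Finset.mem_insert, Prod.mk.injEq] at harc
    rcases harc with ⟨rfl, rfl⟩ | hm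
    · exact Or.inr ⟨.refl, .refl⟩
    · exact Or.inl (.single hm)
  | tail hxz harc ih =>
    simp only [arcRel, Finset.mem_insert, Prod.mk.injEq] at harc
    rcases harc with ⟨rfl, rfl⟩ | hm
    · exact Or.inr ⟨hxz.to_reflTransGen, .refl⟩
    · exact ih.imp (·.tail hm) fun ⟨hxc, hty⟩ => ⟨hxc, hty.tail hm⟩

lemma transGen_arcRel_insert_self {v : V} (h : TransGen (arcRel (insert (c, t) F)) v v) :
    TransGen (arcRel F) v v ∨ ReflTransGen (arcRel F) t c := by
  refine (transGen_arcRel_insert h).imp id fun ⟨hvc, htv⟩ => ?_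
  have htc : ReflTransGen (arcRel (insert (c, t) F)) t c :=
    (ReflTransGen.mono (arcRel_mono (Finset.subset_insert _ _)) _ _ htv).trans hvc
  exact (reflTransGen_arcRel_insert htc).elim id id

lemma IsDivForest.insert_of_not_reflTransGen (hF : IsDivForest F) (hroot : ∀ w, (w, t) ∉ F)
    (htc : ¬ ReflTransGen (arcRel F) t c) : IsDivForest (insert (c, t) F) := by
  refine ⟨fun v hv => ?_, fun w z₁ z₂ h₁ h₂ => ?_⟩
  · exact (transGen_arcRel_insert_self hv).elim (hF.1 v) htc
  · simp only [Finset.mem_insert, Prod.mk.injEq] at h₁ h₂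
    rcases h₁ with ⟨h₁c, rfl⟩ | h₁ <;> rcases h₂ with ⟨h₂c, h₂t⟩ | h₂
    · exact h₁c.trans h₂c.symm
    · exact (hroot _ h₂).elim
    · exact (hroot _ (h₂t ▸ h₁)).elim
    · exact hF.2 w z₁ z₂ h₁ h₂

lemma IsDivForest.notMem_insert_erase (hF : IsDivForest F) {q : V} (hq : (q, c) ∈ F)
    (hct : c ≠ t) (w : V) : (w, c) ∉ insert (c, t) (F.erase (q, c)) := by
  simp only [Finset.mem_insert, Prod.mk.injEq, Finset.mem_erase]
  rintro (⟨-, rfl⟩ | ⟨hne, hw⟩)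
  · exact hct rfl
  · exact hne (by rw [hF.2 c w q hw hq])

end InsertArc

lemma IsDivForest.subset {F F' : Finset (V × V)} (hF : IsDivForest F) (h : F' ⊆ F) :
    IsDivForest F' :=
  ⟨fun v hv => hF.1 v (TransGen.mono (arcRel_mono h) _ _ hv),
    fun w z₁ z₂ h₁ h₂ => hF.2 w z₁ z₂ (h h₁) (h h₂)⟩

namespace IsMaxOutForest

variable {E F : Finset (V × V)} {c t : V}

lemma reflTransGen_of_root (hF : IsMaxOutForest E F) (hroot : ∀ w, (w, t) ∉ F)
    (hE : (c, t) ∈ E) : ReflTransGen (arcRel F) t c := by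
  by_contra htc
  have hle := hF.2.2 _ (Finset.insert_subset hE hF.1) (hF.2.1.insert_of_not_reflTransGen hroot htc)
  rw [Finset.card_insert_of_notMem (hroot c)] at hle
  omega

lemma exchange (hF : IsMaxOutForest E F) (hroot : ∀ w, (w, t) ∉ F) (hE : (c, t) ∈ E)
    {q : V} (hq : (q, c) ∈ F) (hct : c ≠ t) :
    IsMaxOutForest E (insert (c, t) (F.erase (q, c))) := by
  have hsub : F.erase (q, c) ⊆ F := Finset.erase_subset _ _
  have hroot' : ∀ w, (w, t) ∉ F.erase (q, c) := fun w hw => hroot w (hsub hw)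
  have hc : ∀ w, (w, c) ∉ F.erase (q, c) := fun w hw =>
    IsDivForest.notMem_insert_erase hF.2.1 hq hct w (Finset.mem_insert_of_mem hw)
  refine ⟨Finset.insert_subset hE (hsub.trans hF.1),
    (hF.2.1.subset hsub).insert_of_not_reflTransGen hroot'
      (not_reflTransGen_arcRel_of_forall_notMem hc hct.symm),
    fun F' hF'E hF' => ?_⟩
  rw [Finset.card_insert_of_notMem (hroot' c), Finset.card_erase_add_one hq]
  exact hF.2.2 F' hF'E hF'

theorem reflTransGen_of_transGen {i j : V} (hpath : TransGen (arcRel E) i j) :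
    ∀ {F}, IsMaxOutForest E F → (∀ w, (w, j) ∉ F) → ReflTransGen (arcRel F) j i := by
  induction hpath with
  | single hE => exact fun hF hroot => hF.reflTransGen_of_root hroot hE
  | @tail c t _ hE ih =>
    intro F hF hroot
    by_cases hct : c = t
    · subst hct
      exact ih hF hroot
    have htc := hF.reflTransGen_of_root hroot hE
    obtain ⟨q, -, hq⟩ := htc.cases_tail.resolve_left hct
    have hreach := ih (hF.exchange hroot hE hq hct) (IsDivForest.notMem_insert_erase hF.2.1 hq hct)
    have hmono := arcRel_mono (F.erase_subset (q, c))
    rcases reflTransGen_arcRel_insert hreach with hti | hci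
    · exact ReflTransGen.mono hmono _ _ hti
    · exact htc.trans (ReflTransGen.mono hmono _ _ hci)

end IsMaxOutForest

end

theorem stmt4 {V : Type*} [DecidableEq V] (E F : Finset (V × V)) (i j : V)
    (hF : IsMaxOutForest E F)
    (hpathG : Relation.TransGen (arcRel E) i j)
    (hnopathF : ¬ Relation.ReflTransGen (arcRel F) i j) :
    (∃ k, k ≠ i ∧ (k, j) ∈ F) ∨ Relation.ReflTransGen (arcRel F) j i := by
  by_cases hin : ∃ k, (k, j) ∈ F
  · obtain ⟨k, hk⟩ := hin
    refine Or.inl ⟨k, ?_, hk⟩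
    rintro rfl
    exact hnopathF (.single hk)
  · push Not at hin
    exact Or.inr (IsMaxOutForest.reflTransGen_of_transGen hpathG hF hin)
end

section
/- If i and j belong to different trees (weak components) in a maximum out forest F of a digraph G and j is a root of F, then G contains no directed path from i to j. -/
/-- Connectedness by a semipath (weak connectedness) in the arc set `F`. -/
def weakReach {V : Type*} [DecidableEq V] (F : Finset (V × V)) : V → V → Prop :=
  Relation.ReflTransGen (fun a b => arcRel F a b ∨ arcRel F b a)

/-!
Walk along a directed path `i = v₀ → v₁ → ⋯ → j` of `G`, keeping `F` a maximum out forest in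
which `j` is a root and the current vertex lies outside the tree of `j`. An arc of `G` from
outside that tree into the root `j` could be added to `F`, contradicting maximality. An arc
`(v, x)` into a non-root vertex `x` of the tree of `j` can be exchanged for the arc of `F`
entering `x`: the result is again a maximum out forest, `j` is still a root, and `x` now hangs
below `v`, outside the tree of `j`. So the path never reaches `j`.
-/

section

variable {V : Type*} [DecidableEq V]

lemma weakReach_symm {F : Finset (V × V)} {x y : V} (h : weakReach F x y) : weakReach F y x :=
  Relation.ReflTransGen.mono (fun _ _ => Or.symm) _ _ h.swap

lemma reflTransGen_of_weakReach_of_root {F : Finset (V × V)} {j x : V}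
    (hdeg : ∀ w z₁ z₂, (z₁, w) ∈ F → (z₂, w) ∈ F → z₁ = z₂) (hroot : ∀ u, (u, j) ∉ F)
    (h : weakReach F j x) : Relation.ReflTransGen (arcRel F) j x := by
  induction h with
  | refl => exact .refl
  | tail _ hstep ih =>
    rcases hstep with hfwd | hbwd
    · exact ih.tail hfwd
    · rcases ih.cases_tail with rfl | ⟨z, hjz, hz⟩
      · exact absurd hbwd (hroot _)
      · rwa [hdeg _ _ _ hz hbwd] at hjz

lemma exists_mem_of_weakReach_of_root {F : Finset (V × V)} {j x : V}
    (hdeg : ∀ w z₁ z₂, (z₁, w) ∈ F → (z₂, w) ∈ F → z₁ = z₂) (hroot : ∀ u, (u, j) ∉ F)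
    (h : weakReach F x j) (hxj : x ≠ j) :
    ∃ p, Relation.ReflTransGen (arcRel F) j p ∧ (p, x) ∈ F :=
  ((reflTransGen_of_weakReach_of_root hdeg hroot (weakReach_symm h)).cases_tail).resolve_left hxj

lemma transGen_arcRel_insert_s5 {F : Finset (V × V)} {a b x y : V}
    (h : Relation.TransGen (arcRel (insert (a, b) F)) x y) :
    Relation.TransGen (arcRel F) x y ∨
      Relation.ReflTransGen (arcRel (insert (a, b) F)) x a ∧
        Relation.ReflTransGen (arcRel (insert (a, b) F)) b y := by
  induction h with
  | single hstep =>
    rcases Finset.mem_insert.1 hstep with hab | hF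
    · obtain ⟨rfl, rfl⟩ := Prod.mk.inj hab
      exact .inr ⟨.refl, .refl⟩
    · exact .inl (.single hF)
  | tail hxc hstep ih =>
    rcases Finset.mem_insert.1 hstep with hab | hF
    · obtain ⟨rfl, rfl⟩ := Prod.mk.inj hab
      exact .inr ⟨hxc.to_reflTransGen, .refl⟩
    · exact ih.imp (·.tail hF) fun ⟨hxa, hby⟩ => ⟨hxa, hby.tail (Finset.mem_insert_of_mem hF)⟩

lemma weakReach_of_reflTransGen_insert {F₀ F : Finset (V × V)} (hF₀ : F₀ ⊆ F) {a b u v : V}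
    (huv : Relation.ReflTransGen (arcRel (insert (a, b) F₀)) u v) (hu : weakReach F b u) :
    weakReach F b v := by
  induction huv with
  | refl => exact hu
  | tail _ hstep ih =>
    rcases Finset.mem_insert.1 hstep with hab | hF
    · obtain ⟨rfl, rfl⟩ := Prod.mk.inj hab
      exact .refl
    · exact ih.tail (Or.inl (hF₀ hF))

lemma isDivForest_insert {F₀ F : Finset (V × V)} (hF₀ : F₀ ⊆ F) (hF : IsDivForest F) {a b : V}
    (hb : ∀ z, (z, b) ∉ F₀) (hab : ¬ weakReach F a b) :
    IsDivForest (insert (a, b) F₀) := by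
  refine ⟨fun v hv => ?_, fun w z₁ z₂ h₁ h₂ => ?_⟩
  · rcases transGen_arcRel_insert_s5 hv with hcyc | ⟨hva, hbv⟩
    · exact hF.1 v (Relation.TransGen.mono (fun _ _ h => hF₀ h) _ _ hcyc)
    · exact hab (weakReach_symm (weakReach_of_reflTransGen_insert hF₀ (hbv.trans hva) .refl))
  · simp only [Finset.mem_insert, Prod.mk.injEq] at h₁ h₂
    rcases h₁ with ⟨rfl, rfl⟩ | h₁ <;> rcases h₂ with ⟨rfl, hw⟩ | h₂
    · rfl
    · exact absurd h₂ (hb _)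
    · exact absurd h₁ (hw ▸ hb _)
    · exact hF.2 w z₁ z₂ (hF₀ h₁) (hF₀ h₂)

namespace IsMaxOutForest

variable {E F : Finset (V × V)}

lemma of_card_le {F' : Finset (V × V)} (hF : IsMaxOutForest E F) (hF'E : F' ⊆ E)
    (hF' : IsDivForest F') (hcard : F.card ≤ F'.card) : IsMaxOutForest E F' :=
  ⟨hF'E, hF', fun G hGE hG => (hF.2.2 G hGE hG).trans hcard⟩

lemma weakReach_of_mem_of_root (hF : IsMaxOutForest E F) {a j : V} (hroot : ∀ u, (u, j) ∉ F)
    (haj : (a, j) ∈ E) : weakReach F a j := by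
  by_contra hdiff
  have hle := hF.2.2 _ (Finset.insert_subset haj hF.1)
    (isDivForest_insert subset_rfl hF.2.1 hroot hdiff)
  rw [Finset.card_insert_of_notMem (hroot a)] at hle
  omega

lemma exists_exchange (hF : IsMaxOutForest E F) {a x j : V} (hroot : ∀ u, (u, j) ∉ F)
    (haj : ¬ weakReach F a j) (hax : (a, x) ∈ E) (hxj : weakReach F x j) :
    ∃ F', IsMaxOutForest E F' ∧ (∀ u, (u, j) ∉ F') ∧ ¬ weakReach F' x j := by
  obtain rfl | hne := eq_or_ne x j
  · exact absurd (hF.weakReach_of_mem_of_root hroot hax) haj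
  obtain ⟨p, -, hpx⟩ := exists_mem_of_weakReach_of_root hF.2.1.2 hroot hxj hne
  set F₀ := F.erase (p, x)
  have hF₀ : F₀ ⊆ F := Finset.erase_subset _ _
  have hx₀ : ∀ z, (z, x) ∉ F₀ := fun z hz =>
    Finset.ne_of_mem_erase hz (by rw [hF.2.1.2 x z p (Finset.mem_of_mem_erase hz) hpx])
  have hF' : IsDivForest (insert (a, x) F₀) :=
    isDivForest_insert hF₀ hF.2.1 hx₀ fun hax' => haj (hax'.trans hxj)
  have hroot' : ∀ u, (u, j) ∉ insert (a, x) F₀ := by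
    intro u hu
    rcases Finset.mem_insert.1 hu with hax' | hu
    · exact hne (Prod.mk.inj hax').2.symm
    · exact hroot u (hF₀ hu)
  refine ⟨_, hF.of_card_le (Finset.insert_subset hax (hF₀.trans hF.1)) hF' ?_, hroot', ?_⟩
  · rw [Finset.card_insert_of_notMem (hx₀ a), Finset.card_erase_add_one hpx]
  · intro hx'
    obtain ⟨z, hjz, hzx⟩ := exists_mem_of_weakReach_of_root hF'.2 hroot' hx' hne
    obtain rfl : z = a := hF'.2 x z a hzx (Finset.mem_insert_self _ _)
    exact haj ((weakReach_symm (weakReach_of_reflTransGen_insert hF₀ hjz hxj)).trans hxj)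

end IsMaxOutForest

end

/-- If `i` and `j` lie in different trees (weak components) of a maximum out forest `F`
and `j` is a root of `F`, then `G` contains no directed path from `i` to `j`. -/
theorem stmt5 {V : Type*} [DecidableEq V] (E F : Finset (V × V)) (i j : V)
    (hF : IsMaxOutForest E F)
    (hdiff : ¬ weakReach F i j)
    (hroot : ∀ u, (u, j) ∉ F) :
    ¬ Relation.TransGen (arcRel E) i j := by
  intro hpath
  induction hpath using Relation.TransGen.head_induction_on generalizing F with
  | single hij => exact hdiff (hF.weakReach_of_mem_of_root hroot hij)
  | @head v x hvx _ ih =>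
    by_cases hx : weakReach F x j
    · obtain ⟨F', hF', hroot', hx'⟩ := hF.exists_exchange hroot hdiff hvx hx
      exact ih F' hF' hx' hroot'
    · exact ih F hF hx hroot
end

section
/- Let F be a maximum out forest of a digraph G and let (i,j) be an arc of G. Then (i,j) is not an arc of F if and only if F contains an arc (k,j) for some k ≠ i, or i is reachable from j in F. -/
theorem stmt6 {V : Type*} [DecidableEq V] (E F : Finset (V × V)) (i j : V)
    (hF : IsMaxOutForest E F) (hij : (i, j) ∈ E) :
    (i, j) ∉ F ↔
      (∃ k, k ≠ i ∧ (k, j) ∈ F) ∨ Relation.ReflTransGen (arcRel F) j i := by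
  constructor
  · intro hnot
    by_contra hc
    push_neg at hc
    obtain ⟨hk, hreach⟩ := hc
    set F' := insert (i, j) F with hF'
    have hsub : F' ⊆ E := by
      intro x hx
      rcases Finset.mem_insert.mp hx with h | h
      · subst h; exact hij
      · exact hF.1 h
    have hnoin : ∀ k, (k, j) ∉ F := by
      intro k hkj
      by_cases h : k = i
      · exact hnot (h ▸ hkj)
      · exact hk k h hkj
    have key : ∀ a b, Relation.TransGen (arcRel F') a b →
        Relation.TransGen (arcRel F) a b ∨
        (Relation.ReflTransGen (arcRel F) a i ∧ Relation.ReflTransGen (arcRel F) j b) := by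
      intro a b h
      induction h with
      | single h =>
        rcases Finset.mem_insert.mp h with h | h
        · rw [Prod.ext_iff] at h
          obtain ⟨rfl, rfl⟩ := h
          exact Or.inr ⟨Relation.ReflTransGen.refl, Relation.ReflTransGen.refl⟩
        · exact Or.inl (Relation.TransGen.single h)
      | tail _ hstep ih =>
        rcases Finset.mem_insert.mp hstep with h | h
        · rw [Prod.ext_iff] at h
          obtain ⟨rfl, rfl⟩ := h
          rcases ih with h' | ⟨h1, _⟩
          · exact Or.inr ⟨h'.to_reflTransGen, Relation.ReflTransGen.refl⟩
          · exact Or.inr ⟨h1, Relation.ReflTransGen.refl⟩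
        · rcases ih with h' | ⟨h1, h2⟩
          · exact Or.inl (h'.tail h)
          · exact Or.inr ⟨h1, h2.tail h⟩
    have hforest : IsDivForest F' := by
      constructor
      · intro v hv
        rcases key v v hv with h | ⟨h1, h2⟩
        · exact hF.2.1.1 v h
        · exact hreach (h2.trans h1)
      · intro w z₁ z₂ h1 h2
        rcases Finset.mem_insert.mp h1 with h1 | h1 <;>
          rcases Finset.mem_insert.mp h2 with h2 | h2
        · simp only [Prod.mk.injEq] at h1 h2
          rw [h1.1, h2.1]
        · simp only [Prod.mk.injEq] at h1
          exact absurd (h1.2 ▸ h2) (hnoin z₂)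
        · simp only [Prod.mk.injEq] at h2
          exact absurd (h2.2 ▸ h1) (hnoin z₁)
        · exact hF.2.1.2 w z₁ z₂ h1 h2
    have hcard : F'.card = F.card + 1 := Finset.card_insert_of_notMem hnot
    have := hF.2.2 F' hsub hforest
    omega
  · rintro (⟨k, hk, hkj⟩ | hreach) hmem
    · exact hk (hF.2.1.2 j k i hkj hmem)
    · exact hF.2.1.1 j (Relation.TransGen.tail' hreach hmem)
end

section
/- A set W of vertices of a digraph G is the set of roots of some maximum out forest of G if and only if W is a vertex basis of G, i.e., every vertex of G is reachable from some vertex of W and no two distinct vertices of W are reachable from each other. -/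
/-- `W` is a vertex basis of the digraph with arc set `E`: every vertex is reachable
from some member of `W`, and distinct members of `W` are mutually unreachable. -/
def IsVertexBasis {V : Type*} [DecidableEq V] (E : Finset (V × V)) (W : Set V) : Prop :=
  (∀ v, ∃ w ∈ W, Relation.ReflTransGen (arcRel E) w v) ∧
  ∀ w₁ ∈ W, ∀ w₂ ∈ W, w₁ ≠ w₂ → ¬ Relation.ReflTransGen (arcRel E) w₁ w₂

/-!
Every diverging forest `F` on `n` vertices has `n - |F|` roots, so maximising the number of
arcs means minimising the number of roots. The roots of a forest inside `E` reach every vertex,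
and conversely every set `W` reaching every vertex is the root set of a forest inside `E`
(give each vertex outside `W` a parent that is strictly closer to `W`). Hence a maximum forest
has mutually unreachable roots: otherwise one root could be dropped. Conversely, a basis `W`
injects into the roots of any forest, by sending `w` to a root reaching it, so the forest with
roots `W` has the fewest roots.
-/

open Relation Finset

section Reachability

variable {V : Type*} [DecidableEq V]

def reachWithin (E : Finset (V × V)) (W : Set V) : ℕ → Set V
  | 0 => W
  | n + 1 => reachWithin E W n ∪ {v | ∃ u ∈ reachWithin E W n, (u, v) ∈ E}

lemma exists_mem_reachWithin {E : Finset (V × V)} {W : Set V} {w v : V} (hw : w ∈ W)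
    (h : ReflTransGen (arcRel E) w v) : ∃ n, v ∈ reachWithin E W n := by
  induction h with
  | refl => exact ⟨0, hw⟩
  | tail _ hbc ih =>
    obtain ⟨n, hn⟩ := ih
    exact ⟨n + 1, Or.inr ⟨_, hn, hbc⟩⟩

lemma exists_parent_of_reflTransGen (E : Finset (V × V)) (W : Set V)
    (hW : ∀ v, ∃ w ∈ W, ReflTransGen (arcRel E) w v) :
    ∃ (p : V → V) (f : V → ℕ), ∀ v ∉ W, (p v, v) ∈ E ∧ f (p v) < f v := by
  classical
  have hreach : ∀ v, ∃ n, v ∈ reachWithin E W n := fun v =>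
    let ⟨_, hw, h⟩ := hW v
    exists_mem_reachWithin hw h
  have hparent : ∀ v ∉ W, ∃ u, (u, v) ∈ E ∧ Nat.find (hreach u) < Nat.find (hreach v) := by
    intro v hv
    obtain ⟨m, hm⟩ : ∃ m, Nat.find (hreach v) = m + 1 :=
      Nat.exists_eq_succ_of_ne_zero fun h => hv (by simpa [h, reachWithin] using Nat.find_spec (hreach v))
    have hspec := Nat.find_spec (hreach v)
    rw [hm] at hspec
    rcases hspec with hmem | ⟨u, hu, huv⟩
    · exact absurd hmem (Nat.find_min (hreach v) (by omega))
    · exact ⟨u, huv, (Nat.find_min' (hreach u) hu).trans_lt (by omega)⟩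
  choose! p hp using hparent
  exact ⟨p, fun v => Nat.find (hreach v), hp⟩

end Reachability

section Forests

variable {V : Type*} [DecidableEq V] [Fintype V]

def roots (F : Finset (V × V)) : Finset V :=
  univ.filter fun v => ∀ u, (u, v) ∉ F

@[simp]
lemma mem_roots {F : Finset (V × V)} {v : V} : v ∈ roots F ↔ ∀ u, (u, v) ∉ F := by
  simp [roots]

lemma coe_roots (F : Finset (V × V)) : (roots F : Set V) = {w | ∀ u, (u, w) ∉ F} := by
  ext
  simp

lemma card_add_card_roots {F : Finset (V × V)}
    (hF : ∀ w z₁ z₂, (z₁, w) ∈ F → (z₂, w) ∈ F → z₁ = z₂) :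
    F.card + (roots F).card = Fintype.card V := by
  have hinj : Set.InjOn Prod.snd (F : Set (V × V)) := by
    rintro ⟨a, b⟩ ha ⟨a', b'⟩ ha' (rfl : b = b')
    rw [hF b a a' ha ha']
  have himage : F.image Prod.snd = (roots F)ᶜ := by
    ext v
    simp [Prod.exists]
  rw [← card_image_of_injOn hinj, himage, add_comm, card_add_card_compl]

lemma IsDivForest.card_le_card_iff {F F' : Finset (V × V)} (hF : IsDivForest F)
    (hF' : IsDivForest F') : F'.card ≤ F.card ↔ (roots F).card ≤ (roots F').card := by
  have := card_add_card_roots hF.2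
  have := card_add_card_roots hF'.2
  omega

lemma IsDivForest.exists_mem_roots_reflTransGen {F : Finset (V × V)} (hF : IsDivForest F)
    (v : V) : ∃ w ∈ roots F, ReflTransGen (arcRel F) w v := by
  have : Std.Irrefl (TransGen (arcRel F)) := ⟨hF.1⟩
  have hwf : WellFounded (arcRel F) :=
    Subrelation.wf TransGen.single (Finite.wellFounded_of_trans_of_irrefl _)
  induction v using hwf.induction with
  | _ v ih =>
    by_cases hv : ∀ u, (u, v) ∉ F
    · exact ⟨v, mem_roots.2 hv, .refl⟩
    · obtain ⟨u, hu⟩ := not_forall_not.1 hv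
      obtain ⟨w, hw, hwu⟩ := ih u hu
      exact ⟨w, hw, hwu.tail hu⟩

lemma exists_mem_roots_reflTransGen {E F : Finset (V × V)} (hFE : F ⊆ E) (hF : IsDivForest F)
    (v : V) : ∃ w ∈ roots F, ReflTransGen (arcRel E) w v := by
  obtain ⟨w, hw, hwv⟩ := hF.exists_mem_roots_reflTransGen v
  exact ⟨w, hw, ReflTransGen.mono (fun _ _ h => hFE h) _ _ hwv⟩

def parentArcs (W : Finset V) (p : V → V) : Finset (V × V) :=
  (univ.filter (· ∉ W)).image fun v => (p v, v)

@[simp]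
lemma mem_parentArcs {W : Finset V} {p : V → V} {a b : V} :
    (a, b) ∈ parentArcs W p ↔ b ∉ W ∧ p b = a := by
  simp [parentArcs, and_comm]

lemma roots_parentArcs (W : Finset V) (p : V → V) : roots (parentArcs W p) = W := by
  ext v
  simp only [mem_roots, mem_parentArcs, not_and]
  exact ⟨fun h => not_not.1 fun hv => h (p v) hv rfl, fun hv _ h => absurd hv h⟩

lemma isDivForest_parentArcs {W : Finset V} {p : V → V} (f : V → ℕ)
    (hf : ∀ v ∉ W, f (p v) < f v) : IsDivForest (parentArcs W p) := by
  refine ⟨fun v hv => ?_, fun w z₁ z₂ h₁ h₂ => ?_⟩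
  · have hlt : arcRel (parentArcs W p) ≤ Function.onFun (· < ·) f := by
      intro a b hab
      obtain ⟨hb, rfl⟩ := mem_parentArcs.1 hab
      exact hf b hb
    have := TransGen.lift f hlt v v hv
    rw [transGen_eq_self] at this
    exact lt_irrefl _ this
  · rw [← (mem_parentArcs.1 h₁).2, (mem_parentArcs.1 h₂).2]

lemma exists_isDivForest_roots_eq (E : Finset (V × V)) (W : Finset V)
    (hW : ∀ v, ∃ w ∈ W, ReflTransGen (arcRel E) w v) :
    ∃ F ⊆ E, IsDivForest F ∧ roots F = W := by
  obtain ⟨p, f, hpf⟩ := exists_parent_of_reflTransGen E W hW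
  refine ⟨parentArcs W p, fun ⟨a, b⟩ hab => ?_,
    isDivForest_parentArcs f fun v hv => (hpf v hv).2, roots_parentArcs W p⟩
  obtain ⟨hb, rfl⟩ := mem_parentArcs.1 hab
  exact (hpf b hb).1

lemma IsMaxOutForest.not_reflTransGen {E F : Finset (V × V)} (hF : IsMaxOutForest E F)
    {w₁ w₂ : V} (hw₁ : w₁ ∈ roots F) (hw₂ : w₂ ∈ roots F) (hne : w₁ ≠ w₂) :
    ¬ ReflTransGen (arcRel E) w₁ w₂ := by
  intro h₁₂
  obtain ⟨hFE, hFor, hmax⟩ := hF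
  have hdom : ∀ v, ∃ w ∈ (roots F).erase w₂, ReflTransGen (arcRel E) w v := by
    intro v
    obtain ⟨w, hw, hwv⟩ := exists_mem_roots_reflTransGen hFE hFor v
    by_cases hww : w = w₂
    · exact ⟨w₁, mem_erase.2 ⟨hne, hw₁⟩, h₁₂.trans (hww ▸ hwv)⟩
    · exact ⟨w, mem_erase.2 ⟨hww, hw⟩, hwv⟩
  obtain ⟨F', hF'E, hF', hroots⟩ := exists_isDivForest_roots_eq E _ hdom
  have hle := (hFor.card_le_card_iff hF').1 (hmax F' hF'E hF')
  rw [hroots, card_erase_of_mem hw₂] at hle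
  have := card_pos.2 ⟨w₂, hw₂⟩
  omega

end Forests

lemma IsVertexBasis.card_le {V : Type*} [DecidableEq V] {E : Finset (V × V)} {W : Finset V}
    (hW : IsVertexBasis E W) (R : Finset V) (hR : ∀ v, ∃ r ∈ R, ReflTransGen (arcRel E) r v) :
    W.card ≤ R.card := by
  choose d hdR hd using hR
  refine card_le_card_of_injOn d (fun w _ => hdR w) fun a ha b hb hab => ?_
  -- The basis vertex reaching `d a = d b` reaches both `a` and `b`, so it is equal to both.
  obtain ⟨w, hw, hwd⟩ := hW.1 (d a)
  have hwa : w = a := by_contra fun hne => hW.2 w hw a ha hne (hwd.trans (hd a))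
  have hwb : w = b := by_contra fun hne => hW.2 w hw b hb hne ((hab ▸ hwd).trans (hd b))
  exact hwa.symm.trans hwb

theorem stmt7 {V : Type*} [Fintype V] [DecidableEq V] (E : Finset (V × V)) (W : Set V) :
    (∃ F : Finset (V × V), IsMaxOutForest E F ∧ W = {w | ∀ u, (u, w) ∉ F}) ↔
      IsVertexBasis E W := by
  constructor
  · rintro ⟨F, hF, rfl⟩
    rw [← coe_roots]
    exact ⟨exists_mem_roots_reflTransGen hF.1 hF.2.1,
      fun w₁ hw₁ w₂ hw₂ hne => hF.not_reflTransGen hw₁ hw₂ hne⟩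
  · intro hW
    obtain ⟨W, rfl⟩ := W.toFinite.exists_finset_coe
    obtain ⟨F, hFE, hF, hroots⟩ := exists_isDivForest_roots_eq E W hW.1
    refine ⟨F, ⟨hFE, hF, fun F' hF'E hF' => ?_⟩, by rw [← coe_roots, hroots]⟩
    rw [hF.card_le_card_iff hF', hroots]
    exact hW.card_le _ (exists_mem_roots_reflTransGen hF'E hF')
end

section
/- The forest dimension of a digraph G (the number of roots of any maximum out forest of G) equals the number of undominated knots of G. -/
open scoped Classical

/-- The maximum number of arcs in a spanning diverging forest of `E`. -/
noncomputable def maxArcs {V : Type*} [Fintype V] [DecidableEq V]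
    (E : Finset (V × V)) : ℕ :=
  (Finset.univ.filter (fun F : Finset (V × V) => F ⊆ E ∧ IsDivForest F)).sup Finset.card

/-- The forest dimension of the digraph with arc set `E`: the number of roots
(trees) of any maximum out forest, i.e. `n` minus the maximum number of arcs. -/
noncomputable def forestDim {V : Type*} [Fintype V] [DecidableEq V]
    (E : Finset (V × V)) : ℕ :=
  Fintype.card V - maxArcs E

/-- `K` is an undominated knot of the digraph with arc set `E`. -/
def IsUndomKnot {V : Type*} [DecidableEq V] (E : Finset (V × V)) (K : Finset V) : Prop :=
  K.Nonempty ∧ (∀ i ∈ K, ∀ j ∈ K, Relation.ReflTransGen (arcRel E) i j) ∧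
  ∀ i j : V, (i, j) ∈ E → j ∈ K → i ∈ K

section AuxStmt8
variable {V : Type*} [Fintype V] [DecidableEq V] (E : Finset (V × V))

set_option linter.unusedSectionVars false

/-- A knot is closed under taking predecessors along reflexive-transitive reachability. -/
lemma knot_closed_reach {K : Finset V} (hK : IsUndomKnot E K) {u w : V}
    (h : Relation.ReflTransGen (arcRel E) u w) (hw : w ∈ K) : u ∈ K := by
  induction h using Relation.ReflTransGen.head_induction_on with
  | refl => exact hw
  | head hab _ ih => exact hK.2.2 _ _ hab ih

/-- Two knots sharing a vertex are equal. -/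
lemma knot_eq_of_mem {K₁ K₂ : Finset V} (h1 : IsUndomKnot E K₁) (h2 : IsUndomKnot E K₂)
    {v : V} (hv1 : v ∈ K₁) (hv2 : v ∈ K₂) : K₁ = K₂ := by
  ext u
  constructor
  · intro hu; exact knot_closed_reach E h2 (h1.2.1 u hu v hv1) hv2
  · intro hu; exact knot_closed_reach E h1 (h2.2.1 u hu v hv2) hv1

/-- Every vertex is reachable from some knot. -/
lemma exists_knot_reaching (v : V) :
    ∃ K : Finset V, IsUndomKnot E K ∧ ∃ r ∈ K, Relation.ReflTransGen (arcRel E) r v := by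
  classical
  obtain ⟨u, huB, hmin⟩ := Finset.exists_min_image
    (Finset.univ.filter (fun u => Relation.ReflTransGen (arcRel E) u v))
    (fun u => (Finset.univ.filter (fun w => Relation.ReflTransGen (arcRel E) w u)).card)
    ⟨v, by simp [Relation.ReflTransGen.refl]⟩
  have huv : Relation.ReflTransGen (arcRel E) u v := (Finset.mem_filter.mp huB).2
  refine ⟨Finset.univ.filter (fun w =>
      Relation.ReflTransGen (arcRel E) u w ∧ Relation.ReflTransGen (arcRel E) w u),
    ⟨⟨u, by simp [Relation.ReflTransGen.refl]⟩, ?_, ?_⟩, u, by simp [Relation.ReflTransGen.refl], huv⟩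
  · intro i hi j hj
    simp only [Finset.mem_filter] at hi hj
    exact hi.2.2.trans hj.2.1
  · intro i j hij hj
    simp only [Finset.mem_filter, Finset.mem_univ, true_and] at hj ⊢
    have hiu : Relation.ReflTransGen (arcRel E) i u :=
      (Relation.ReflTransGen.single hij).trans hj.2
    refine ⟨?_, hiu⟩
    by_contra hui
    -- then pred i ⊊ pred u, contradicting minimality
    have hsub : (Finset.univ.filter (fun w => Relation.ReflTransGen (arcRel E) w i)) ⊂
        (Finset.univ.filter (fun w => Relation.ReflTransGen (arcRel E) w u)) := by
      constructor
      · intro w hw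
        simp only [Finset.mem_filter, Finset.mem_univ, true_and] at hw ⊢
        exact hw.trans hiu
      · intro hsub'
        exact hui (by simpa using hsub' (by simp [Relation.ReflTransGen.refl] : u ∈ _))
    have hlt := Finset.card_lt_card hsub
    have hiB : i ∈ Finset.univ.filter (fun u => Relation.ReflTransGen (arcRel E) u v) := by
      simp only [Finset.mem_filter, Finset.mem_univ, true_and]
      exact hiu.trans huv
    exact absurd (hmin i hiB) (by omega)

/-- Every knot contains a vertex that is not the head of any arc of a diverging forest. -/
lemma knot_nonhead {F : Finset (V × V)} (hFE : F ⊆ E) (hF : IsDivForest F)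
    {K : Finset V} (hK : IsUndomKnot E K) : ∃ m, m ∈ K ∧ m ∉ F.image Prod.snd := by
  classical
  by_contra h
  push_neg at h
  have hpar : ∀ v ∈ K, ∃ u, (u, v) ∈ F ∧ u ∈ K := by
    intro v hv
    obtain ⟨x, hxF, hx2⟩ := Finset.mem_image.mp (h v hv)
    refine ⟨x.1, ?_, ?_⟩
    · rw [← hx2]; exact hxF
    · exact hK.2.2 x.1 v (by rw [← hx2]; exact hFE hxF) hv
  set g : V → V := fun v => if h' : ∃ u, (u, v) ∈ F ∧ u ∈ K then h'.choose else v with hgdef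
  have hg : ∀ v ∈ K, (g v, v) ∈ F ∧ g v ∈ K := by
    intro v hv
    have h' := hpar v hv
    simp only [hgdef, dif_pos h']
    exact h'.choose_spec
  set f : ℕ → V := fun n => g^[n] hK.1.choose with hfdef
  have hfK : ∀ n, f n ∈ K := by
    intro n
    induction n with
    | zero => exact hK.1.choose_spec
    | succ n ih =>
      have : f (n + 1) = g (f n) := Function.iterate_succ_apply' g n _
      rw [this]; exact (hg _ ih).2
  have harc : ∀ n, (f (n + 1), f n) ∈ F := by
    intro n
    have : f (n + 1) = g (f n) := Function.iterate_succ_apply' g n _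
    rw [this]; exact (hg _ (hfK n)).1
  have hchain : ∀ n k, Relation.TransGen (arcRel F) (f (n + k + 1)) (f n) := by
    intro n k
    induction k with
    | zero => exact Relation.TransGen.single (harc n)
    | succ k ih => exact Relation.TransGen.head (harc (n + k + 1)) ih
  have key : ∀ a b : ℕ, a < b → f a = f b → False := by
    intro a b hab heq
    have hb : a + (b - a - 1) + 1 = b := by omega
    have := hchain a (b - a - 1)
    rw [hb, ← heq] at this
    exact hF.1 (f a) this
  obtain ⟨a, b, hne, heq⟩ := Fintype.exists_ne_map_eq_of_card_lt
    (fun i : Fin (Fintype.card V + 1) => f i) (by simp)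
  rcases Ne.lt_or_gt hne with h' | h'
  · exact key a b h' heq
  · exact key b a h' heq.symm

/-- Upper bound: any diverging forest has at most `n` minus the number of knots arcs. -/
lemma forest_card_add_knots_le {F : Finset (V × V)} (hFE : F ⊆ E) (hF : IsDivForest F) :
    F.card + (Finset.univ.filter (fun K : Finset V => IsUndomKnot E K)).card ≤
      Fintype.card V := by
  classical
  set 𝒦 := Finset.univ.filter (fun K : Finset V => IsUndomKnot E K) with h𝒦
  set heads := F.image Prod.snd with hheads
  have hhc : heads.card = F.card := by
    apply Finset.card_image_of_injOn
    intro x hx y hy hxy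
    have h1 : (x.1, x.2) ∈ F := by simpa using hx
    have h2 : (y.1, x.2) ∈ F := by rw [hxy]; simpa using hy
    have := hF.2 x.2 x.1 y.1 h1 h2
    exact Prod.ext this hxy
  have hKknot : ∀ K : {x // x ∈ 𝒦}, IsUndomKnot E K.1 := fun K =>
    (Finset.mem_filter.mp K.2).2
  set m : {x // x ∈ 𝒦} → V := fun K => (knot_nonhead E hFE hF (hKknot K)).choose with hmdef
  have hm : ∀ K : {x // x ∈ 𝒦}, m K ∈ K.1 ∧ m K ∉ heads := fun K =>
    (knot_nonhead E hFE hF (hKknot K)).choose_spec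
  set M := 𝒦.attach.image m with hM
  have hMc : M.card = 𝒦.card := by
    rw [hM, Finset.card_image_of_injOn, Finset.card_attach]
    intro K1 _ K2 _ hK12
    have h1 := (hm K1).1
    have h2 := (hm K2).1
    rw [hK12] at h1
    exact Subtype.ext (knot_eq_of_mem E (hKknot K1) (hKknot K2) h1 h2)
  have hdisj : Disjoint M heads := by
    rw [Finset.disjoint_left]
    intro a haM haH
    obtain ⟨K, _, hKa⟩ := Finset.mem_image.mp haM
    rw [← hKa] at haH
    exact (hm K).2 haH
  calc F.card + 𝒦.card = heads.card + M.card := by rw [hhc, hMc]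
    _ = (heads ∪ M).card := (Finset.card_union_of_disjoint hdisj.symm).symm
    _ ≤ Fintype.card V := Finset.card_le_univ _

/-- Construction: a diverging forest with exactly one root per knot. -/
lemma exists_good_forest :
    ∃ F : Finset (V × V), F ⊆ E ∧ IsDivForest F ∧
      F.card + (Finset.univ.filter (fun K : Finset V => IsUndomKnot E K)).card =
        Fintype.card V := by
  classical
  set 𝒦 := Finset.univ.filter (fun K : Finset V => IsUndomKnot E K) with h𝒦
  have hKknot : ∀ K : {x // x ∈ 𝒦}, IsUndomKnot E K.1 := fun K =>
    (Finset.mem_filter.mp K.2).2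
  set rep : {x // x ∈ 𝒦} → V := fun K => (hKknot K).1.choose with hrepdef
  have hrep : ∀ K, rep K ∈ K.1 := fun K => (hKknot K).1.choose_spec
  set R := 𝒦.attach.image rep with hR
  have hRc : R.card = 𝒦.card := by
    rw [hR, Finset.card_image_of_injOn, Finset.card_attach]
    intro K1 _ K2 _ hK12
    have h1 := hrep K1
    have h2 := hrep K2
    rw [hK12] at h1
    exact Subtype.ext (knot_eq_of_mem E (hKknot K1) (hKknot K2) h1 h2)
  -- every vertex is reachable from R
  have hreachR : ∀ v : V, ∃ r ∈ R, Relation.ReflTransGen (arcRel E) r v := by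
    intro v
    obtain ⟨K, hK, r', hr'K, hr'v⟩ := exists_knot_reaching E v
    have hK𝒦 : K ∈ 𝒦 := by simp [h𝒦, hK]
    refine ⟨rep ⟨K, hK𝒦⟩, Finset.mem_image.mpr ⟨⟨K, hK𝒦⟩, Finset.mem_attach _ _, rfl⟩, ?_⟩
    exact (hK.2.1 _ (hrep ⟨K, hK𝒦⟩) r' hr'K).trans hr'v
  -- BFS levels
  set S : ℕ → Finset V := fun k => Nat.rec R
    (fun _ Sk => Sk ∪ Finset.univ.filter (fun v => ∃ u ∈ Sk, (u, v) ∈ E)) k with hSdef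
  have hS0 : S 0 = R := rfl
  have hSsucc : ∀ k, S (k + 1) = S k ∪
      Finset.univ.filter (fun v => ∃ u ∈ S k, (u, v) ∈ E) := fun k => rfl
  have hSex : ∀ v : V, ∃ k, v ∈ S k := by
    intro v
    obtain ⟨r, hrR, hrv⟩ := hreachR v
    induction hrv with
    | refl => exact ⟨0, by rw [hS0]; exact hrR⟩
    | tail _ hbc ih =>
      obtain ⟨k, hk⟩ := ih
      exact ⟨k + 1, by rw [hSsucc]; exact Finset.mem_union_right _ (by
        simp only [Finset.mem_filter, Finset.mem_univ, true_and]
        exact ⟨_, hk, hbc⟩)⟩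
  set d : V → ℕ := fun v => Nat.find (hSex v) with hddef
  have hdS : ∀ v, v ∈ S (d v) := fun v => Nat.find_spec (hSex v)
  have hdmin : ∀ v k, k < d v → v ∉ S k := fun v k hk => Nat.find_min (hSex v) hk
  have hparent : ∀ v, v ∉ R → ∃ u, u ∈ S (d v - 1) ∧ (u, v) ∈ E := by
    intro v hvR
    have hd0 : d v ≠ 0 := by
      intro h0
      apply hvR
      have := hdS v
      rwa [h0, hS0] at this
    have hv : v ∈ S (d v - 1 + 1) := by
      have : d v - 1 + 1 = d v := by omega
      rw [this]; exact hdS v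
    rw [hSsucc] at hv
    rcases Finset.mem_union.mp hv with h | h
    · exact absurd h (hdmin v (d v - 1) (by omega))
    · simpa using h
  set p : V → V := fun v => if h : ∃ u, u ∈ S (d v - 1) ∧ (u, v) ∈ E then h.choose else v
    with hpdef
  have hp : ∀ v, v ∉ R → (p v, v) ∈ E ∧ d (p v) < d v := by
    intro v hvR
    have h' := hparent v hvR
    have hd0 : d v ≠ 0 := by
      intro h0
      apply hvR
      have := hdS v
      rwa [h0, hS0] at this
    simp only [hpdef, dif_pos h']
    refine ⟨h'.choose_spec.2, ?_⟩
    have hle : d h'.choose ≤ d v - 1 := Nat.find_le h'.choose_spec.1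
    omega
  set F := (Finset.univ \ R).image (fun v => (p v, v)) with hF
  have hmemF : ∀ x : V × V, x ∈ F → x.2 ∉ R ∧ x = (p x.2, x.2) := by
    intro x hx
    obtain ⟨v, hv, hvx⟩ := Finset.mem_image.mp hx
    have hvR : v ∉ R := (Finset.mem_sdiff.mp hv).2
    rw [← hvx]
    exact ⟨hvR, rfl⟩
  refine ⟨F, ?_, ⟨?_, ?_⟩, ?_⟩
  · intro x hx
    obtain ⟨hxR, hxe⟩ := hmemF x hx
    rw [hxe]
    exact (hp x.2 hxR).1
  · -- acyclicity
    have harcd : ∀ a b, arcRel F a b → d a < d b := by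
      intro a b hab
      obtain ⟨hbR, hxe⟩ := hmemF (a, b) hab
      simp only at hbR
      have : a = p b := congrArg Prod.fst hxe
      rw [this]
      exact (hp b hbR).2
    have htd : ∀ a b, Relation.TransGen (arcRel F) a b → d a < d b := by
      intro a b hab
      induction hab with
      | single h => exact harcd _ _ h
      | tail _ h ih => exact lt_trans ih (harcd _ _ h)
    intro v hv
    exact lt_irrefl _ (htd v v hv)
  · -- in-degree ≤ 1
    intro w z1 z2 h1 h2
    have e1 := (hmemF (z1, w) h1).2
    have e2 := (hmemF (z2, w) h2).2
    simp only at e1 e2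
    have g1 : z1 = p w := congrArg Prod.fst e1
    have g2 : z2 = p w := congrArg Prod.fst e2
    rw [g1, g2]
  · -- cardinality
    have hFc : F.card = (Finset.univ \ R).card := by
      rw [hF]
      apply Finset.card_image_of_injOn
      intro x _ y _ hxy
      exact congrArg Prod.snd hxy
    have hsd : (Finset.univ \ R).card = Fintype.card V - R.card := by
      rw [Finset.card_sdiff_of_subset (Finset.subset_univ R), Finset.card_univ]
    have hRle : R.card ≤ Fintype.card V := Finset.card_le_univ R
    rw [hFc, hsd, hRc] at *
    omega

end AuxStmt8

/-- The forest dimension equals the number of undominated knots. -/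
theorem stmt8 {V : Type*} [Fintype V] [DecidableEq V] (E : Finset (V × V)) :
    forestDim E =
      (Finset.univ.filter (fun K : Finset V => IsUndomKnot E K)).card := by
  classical
  set s := (Finset.univ.filter (fun K : Finset V => IsUndomKnot E K)).card with hs
  obtain ⟨F0, hF0E, hF0, hF0c⟩ := exists_good_forest E
  have hsle : s ≤ Fintype.card V := by omega
  have hmax : maxArcs E = Fintype.card V - s := by
    unfold maxArcs
    apply le_antisymm
    · apply Finset.sup_le
      intro F hF
      simp only [Finset.mem_filter, Finset.mem_univ, true_and] at hF
      have := forest_card_add_knots_le E hF.1 hF.2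
      omega
    · have hmem : F0 ∈ Finset.univ.filter
          (fun F : Finset (V × V) => F ⊆ E ∧ IsDivForest F) := by
        simp only [Finset.mem_filter, Finset.mem_univ, true_and]
        exact ⟨hF0E, hF0⟩
      have := Finset.le_sup (f := Finset.card) hmem
      omega
  have h2 : forestDim E = Fintype.card V - maxArcs E := rfl
  rw [h2, hmax]
  omega
end
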